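/- For A = {1, 2, 3} ⊆ [m] with m ≥ 3, the Vietoris–Rips complex VR(F^m_{⪯A}, 2) is homotopy equivalent to the 3-sphere S³. -/

import Mathlib

open Finset

/-- An abstract simplicial complex on a vertex type `V`: a collection of nonempty
finite subsets of `V` (the faces), closed under taking nonempty subsets. -/
structure AbsSC (V : Type) where
  faces : Set (Finset V)
  not_empty_mem : ∅ ∉ faces
  down_closed : ∀ s ∈ faces, ∀ t : Finset V, t ⊆ s → t ≠ ∅ → t ∈ faces

namespace AbsSC

variable {V W : Type}

/-- The vertex set of a simplicial complex. -/
def vertices (K : AbsSC V) : Set V := {v | ({v} : Finset V) ∈ K.faces}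

/-- The geometric realization of a simplicial complex: the space of convex weightings
supported on a face, topologized as a subspace of `V → ℝ`. -/
def space (K : AbsSC V) : Type :=
  {f : V → ℝ // (∀ v, 0 ≤ f v) ∧ ∃ s ∈ K.faces, (∀ v, f v ≠ 0 → v ∈ s) ∧ ∑ v ∈ s, f v = 1}

instance (K : AbsSC V) : TopologicalSpace K.space := by unfold space; infer_instance

/-- `L` is a subcomplex of `K`. -/
def IsSubcomplex (L K : AbsSC V) : Prop := L.faces ⊆ K.faces

/-- Homotopy equivalence of simplicial complexes (of their geometric realizations). -/
def HEquiv (K : AbsSC V) (L : AbsSC W) : Prop :=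
  Nonempty (ContinuousMap.HomotopyEquiv K.space L.space)

/-- The realization of `K` is homotopy equivalent to the topological space `X`. -/
def HEquivTop (K : AbsSC V) (X : Type) [TopologicalSpace X] : Prop :=
  Nonempty (ContinuousMap.HomotopyEquiv K.space X)

/-- The inclusion of realizations induced by a subcomplex inclusion. -/
def incl {L K : AbsSC V} (h : L.faces ⊆ K.faces) : C(L.space, K.space) where
  toFun f := ⟨f.1, f.2.1, by obtain ⟨s, hs, h1, h2⟩ := f.2.2; exact ⟨s, h hs, h1, h2⟩⟩
  continuous_toFun := Continuous.subtype_mk continuous_subtype_val _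

variable [DecidableEq V]

/-- The link of a vertex. -/
def link (K : AbsSC V) (v : V) : AbsSC V where
  faces := {σ | σ ≠ ∅ ∧ v ∉ σ ∧ σ ∪ {v} ∈ K.faces}
  not_empty_mem h := h.1 rfl
  down_closed := by
    rintro s ⟨hne, hv, hs⟩ t hts htne
    exact ⟨htne, fun hvt => hv (hts hvt),
      K.down_closed _ hs _ (Finset.union_subset_union hts (Finset.Subset.refl _)) (by simp [Finset.union_eq_empty])⟩

lemma link_subset (K : AbsSC V) (v : V) : (K.link v).faces ⊆ K.faces := by
  rintro σ ⟨hne, hv, hσ⟩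
  exact K.down_closed _ hσ _ Finset.subset_union_left hne

/-- The complex induced on the vertices other than `v`. -/
def delete (K : AbsSC V) (v : V) : AbsSC V where
  faces := {σ | σ ∈ K.faces ∧ v ∉ σ}
  not_empty_mem h := K.not_empty_mem h.1
  down_closed := by
    rintro s ⟨hs, hv⟩ t hts htne
    exact ⟨K.down_closed _ hs _ hts htne, fun h => hv (hts h)⟩

/-- The star of a vertex: `st_K(v) = {σ : σ ∪ {v} ∈ K}`. -/
def star (K : AbsSC V) (v : V) : AbsSC V where
  faces := {σ | σ ≠ ∅ ∧ σ ∪ {v} ∈ K.faces}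
  not_empty_mem h := h.1 rfl
  down_closed := by
    rintro s ⟨hne, hs⟩ t hts htne
    exact ⟨htne,
      K.down_closed _ hs _ (Finset.union_subset_union hts (Finset.Subset.refl _)) (by simp [Finset.union_eq_empty])⟩

/-- The star cluster of a subcomplex `L` in `K`: the union of stars of vertices of `L`. -/
def starCluster (K L : AbsSC V) : AbsSC V where
  faces := {σ | σ ≠ ∅ ∧ ∃ v, ({v} : Finset V) ∈ L.faces ∧ σ ∪ {v} ∈ K.faces}
  not_empty_mem h := h.1 rfl
  down_closed := by
    rintro s ⟨hne, v, hvL, hs⟩ t hts htne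
    exact ⟨htne, v, hvL,
      K.down_closed _ hs _ (Finset.union_subset_union hts (Finset.Subset.refl _)) (by simp [Finset.union_eq_empty])⟩

/-- The union of two simplicial complexes. -/
def union (K₁ K₂ : AbsSC V) : AbsSC V where
  faces := K₁.faces ∪ K₂.faces
  not_empty_mem h := by
    rcases h with h | h
    exacts [K₁.not_empty_mem h, K₂.not_empty_mem h]
  down_closed := by
    rintro s (hs | hs) t hts htne
    exacts [Or.inl (K₁.down_closed _ hs _ hts htne), Or.inr (K₂.down_closed _ hs _ hts htne)]

/-- The union of a family of simplicial complexes. -/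
def iUnionC {ι : Type} (F : ι → AbsSC V) : AbsSC V where
  faces := ⋃ i, (F i).faces
  not_empty_mem h := by
    obtain ⟨i, hi⟩ := Set.mem_iUnion.mp h
    exact (F i).not_empty_mem hi
  down_closed := by
    intro s hs t hts htne
    obtain ⟨i, hi⟩ := Set.mem_iUnion.mp hs
    exact Set.mem_iUnion.mpr ⟨i, (F i).down_closed _ hi _ hts htne⟩

/-- The `n`-skeleton of a complex: all faces with at most `n+1` vertices. -/
def skeleton (K : AbsSC V) (n : ℕ) : AbsSC V where
  faces := {σ | σ ∈ K.faces ∧ σ.card ≤ n + 1}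
  not_empty_mem h := K.not_empty_mem h.1
  down_closed := by
    rintro s ⟨hs, hcard⟩ t hts htne
    exact ⟨K.down_closed _ hs _ hts htne, le_trans (Finset.card_le_card hts) hcard⟩

/-- The simplicial complex generated by a single simplex `s` (all its nonempty subsets). -/
def simplexCx (s : Finset V) : AbsSC V where
  faces := {t | t ≠ ∅ ∧ t ⊆ s}
  not_empty_mem h := h.1 rfl
  down_closed := by
    rintro a ⟨hne, has⟩ t hta htne
    exact ⟨htne, hta.trans has⟩

/-- A maximal simplex (facet) of `K`. -/
def IsFacet (K : AbsSC V) (σ : Finset V) : Prop :=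
  σ ∈ K.faces ∧ ∀ τ ∈ K.faces, σ ⊆ τ → τ = σ

/-- `K` is a clique complex: any nonempty set of vertices which pairwise span edges is a face. -/
def IsCliqueCx (K : AbsSC V) : Prop :=
  ∀ σ : Finset V, σ ≠ ∅ → (∀ v ∈ σ, ({v} : Finset V) ∈ K.faces) →
    (∀ v ∈ σ, ∀ w ∈ σ, v ≠ w → ({v, w} : Finset V) ∈ K.faces) → σ ∈ K.faces

/-- `L` is a full subcomplex of `K`. -/
def IsFull (L K : AbsSC V) : Prop :=
  ∀ σ ∈ K.faces, (∀ v ∈ σ, ({v} : Finset V) ∈ L.faces) → σ ∈ L.faces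

end AbsSC

noncomputable section

/-- The `n`-dimensional sphere. -/
abbrev Sph (n : ℕ) : Type := Metric.sphere (0 : EuclideanSpace ℝ (Fin (n + 1))) 1

/-- A base point on the sphere. -/
def sphBase (n : ℕ) : Sph n :=
  ⟨EuclideanSpace.single 0 1, by simp⟩

/-- Relation gluing the base points of `c` copies of a pointed space to an auxiliary point. -/
inductive wedgeRel (c : ℕ) (X : Type) (x₀ : X) : Unit ⊕ Fin c × X → Unit ⊕ Fin c × X → Prop
  | glue (i : Fin c) : wedgeRel c X x₀ (Sum.inl ()) (Sum.inr (i, x₀))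

/-- The wedge sum of `c` copies of the pointed space `(X, x₀)`. -/
def Wedge (c : ℕ) (X : Type) [TopologicalSpace X] (x₀ : X) : Type := Quot (wedgeRel c X x₀)

instance (c : ℕ) (X : Type) [TopologicalSpace X] (x₀ : X) : TopologicalSpace (Wedge c X x₀) := by
  unfold Wedge; infer_instance

/-- The base point of the wedge. -/
def wedgePt (c : ℕ) (X : Type) [TopologicalSpace X] (x₀ : X) : Wedge c X x₀ :=
  Quot.mk _ (Sum.inl ())

/-- The wedge sum of `c` copies of the `n`-sphere. -/
abbrev WedgeSph (n c : ℕ) : Type := Wedge c (Sph n) (sphBase n)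

/-- The base point of a wedge of spheres. -/
def wedgeSphPt (n c : ℕ) : WedgeSph n c := wedgePt c _ _

/-- Relation gluing the two base points in a binary wedge. -/
inductive wedge2Rel (X Y : Type) (x₀ : X) (y₀ : Y) : X ⊕ Y → X ⊕ Y → Prop
  | glue : wedge2Rel X Y x₀ y₀ (Sum.inl x₀) (Sum.inr y₀)

/-- The wedge sum `X ∨ Y` of two pointed spaces. -/
def Wedge2 (X Y : Type) [TopologicalSpace X] [TopologicalSpace Y] (x₀ : X) (y₀ : Y) : Type :=
  Quot (wedge2Rel X Y x₀ y₀)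

instance (X Y : Type) [TopologicalSpace X] [TopologicalSpace Y] (x₀ : X) (y₀ : Y) :
    TopologicalSpace (Wedge2 X Y x₀ y₀) := by unfold Wedge2; infer_instance

/-- Relation collapsing the top and bottom of the cylinder `X × [0,1]` to two cone points. -/
inductive suspRel (X : Type) : X × unitInterval ⊕ Bool → X × unitInterval ⊕ Bool → Prop
  | zero (x : X) : suspRel X (Sum.inl (x, 0)) (Sum.inr false)
  | one (x : X) : suspRel X (Sum.inl (x, 1)) (Sum.inr true)

/-- The (unreduced) suspension `Σ X`. -/
def Susp (X : Type) [TopologicalSpace X] : Type := Quot (suspRel X)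

instance (X : Type) [TopologicalSpace X] : TopologicalSpace (Susp X) := by
  unfold Susp; infer_instance

/-- The north cone point of the suspension. -/
def suspNorth (X : Type) [TopologicalSpace X] : Susp X := Quot.mk _ (Sum.inr true)

end

/-- The Vietoris–Rips complex at scale `r` of a collection `F` of finite subsets of `ℕ`,
with respect to the symmetric difference metric `d(A,B) = |A Δ B|`. -/
def VRc (F : Set (Finset ℕ)) (r : ℕ) : AbsSC (Finset ℕ) where
  faces := {σ | σ.Nonempty ∧ (∀ A ∈ σ, A ∈ F) ∧
    ∀ A ∈ σ, ∀ B ∈ σ, (symmDiff A B).card ≤ r}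
  not_empty_mem h := by simpa using h.1
  down_closed := by
    rintro s ⟨hne, hF, hd⟩ t hts htne
    exact ⟨Finset.nonempty_iff_ne_empty.mpr htne, fun A hA => hF A (hts hA),
      fun A hA B hB => hd A (hts hA) B (hts hB)⟩

/-- `F_n^m`: all `n`-element subsets of `[m] = {1, …, m}`. -/
def Fnm (m n : ℕ) : Set (Finset ℕ) := {A | A ⊆ Finset.Icc 1 m ∧ A.card = n}

/-- `F_{≤ n}^m`: all subsets of `[m]` of cardinality at most `n`. -/
def Fle (m n : ℕ) : Set (Finset ℕ) := {A | A ⊆ Finset.Icc 1 m ∧ A.card ≤ n}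

/-- The simplex `N[C] = {A : C ⊆ A, |A \ C| = 1}` inside `[m]`. -/
def NSimp (m : ℕ) (C : Finset ℕ) : Finset (Finset ℕ) :=
  (Finset.Icc 1 m \ C).image (fun x => insert x C)

/-- The simplex `L[S]`: all subsets of `S` obtained by removing one element. -/
def LSimp (S : Finset ℕ) : Finset (Finset ℕ) := S.image (fun x => S.erase x)

/-- The total order `≺`: first compare cardinalities, then compare the increasing
enumerations lexicographically. -/
def precLT (A B : Finset ℕ) : Prop :=
  A.card < B.card ∨
    (A.card = B.card ∧ List.Lex (· < ·) (A.sort (· ≤ ·)) (B.sort (· ≤ ·)))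

/-- `A ⪯ B`. -/
def precLE (A B : Finset ℕ) : Prop := precLT A B ∨ A = B

/-- `F^m_{≺ A}`: all subsets of `[m]` strictly preceding `A`. -/
def FprecLT (m : ℕ) (A : Finset ℕ) : Set (Finset ℕ) :=
  {B | B ⊆ Finset.Icc 1 m ∧ precLT B A}

/-- `F^m_{⪯ A}`: all subsets of `[m]` preceding (or equal to) `A`. -/
def FprecLE (m : ℕ) (A : Finset ℕ) : Set (Finset ℕ) :=
  {B | B ⊆ Finset.Icc 1 m ∧ precLE B A}

/-- The `j`-th value (0-indexed) of an enumeration `i : Fin n → ℕ`. -/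
def ith {n : ℕ} (i : Fin n → ℕ) (j : ℕ) : ℕ := if h : j < n then i ⟨j, h⟩ else 0

/-- The `ℓ`-th entry (1-indexed) of the enumeration, as an integer, with `i_0 = -1`. -/
def ivZ {n : ℕ} (i : Fin n → ℕ) (ℓ : ℕ) : ℤ := if ℓ = 0 then -1 else (ith i (ℓ - 1) : ℤ)

/-- For `B = i_1 i_2 ⋯ i_n` (increasing), with `d_1 = i_1` and
`d_ℓ = i_ℓ - (i_{ℓ-1} + 1)`, `r_B = Σ_{k=2}^{n-2} C(k,2) + Σ_{ℓ=1}^{n-2} d_ℓ·C(n-ℓ,2)`. -/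
def rA (B : Finset ℕ) : ℕ :=
  (∑ k ∈ Finset.Icc 2 (B.card - 2), Nat.choose k 2) +
    ∑ ℓ ∈ Finset.Icc 1 (B.card - 2),
      ((B.sort (· ≤ ·)).getD (ℓ - 1) 0 -
        (if ℓ = 1 then 0 else (B.sort (· ≤ ·)).getD (ℓ - 2) 0 + 1)) * Nat.choose (B.card - ℓ) 2

/-- For `B = i_1 i_2 ⋯ i_n` (increasing), with `c_1 = i_1 - 1` and
`c_ℓ = i_ℓ - (i_{ℓ-1} + 1)`, `s_B = Σ_{k=2}^{n-2} C(k,2) + Σ_{ℓ=1}^{n-2} c_ℓ·C(n-ℓ,2)`. -/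
def sA (B : Finset ℕ) : ℕ :=
  (∑ k ∈ Finset.Icc 2 (B.card - 2), Nat.choose k 2) +
    ∑ ℓ ∈ Finset.Icc 1 (B.card - 2),
      ((B.sort (· ≤ ·)).getD (ℓ - 1) 0 -
        (if ℓ = 1 then 1 else (B.sort (· ≤ ·)).getD (ℓ - 2) 0 + 1)) * Nat.choose (B.card - ℓ) 2

/-- `t_n = Σ_{A ⊆ [m], |A| = n} r_A`. -/
def tN (m n : ℕ) : ℕ :=
  ∑ A ∈ (Finset.Icc 1 m).powerset.filter (fun A => A.card = n), rA A

/-- `o_{m,n} = Σ { s_A : A ∈ F^m_{n+2}, min A ≥ 2 }`. -/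
def omn (m n : ℕ) : ℕ :=
  ∑ A ∈ (Finset.Icc 1 m).powerset.filter (fun A => A.card = n + 2 ∧ ∀ x ∈ A, 2 ≤ x), sA A


/-!
Every `B ⪯ {1,2,3}` other than `{1,2,3}` has at most two elements. Among the subsets of
`{1,2,3}`, the four complementary pairs `A, {1,2,3} \ A` are at distance 3 and all other pairs
at distance at most 2, so they span the boundary of the 4-dimensional cross-polytope, which
radial projection identifies with `S³`. Sending every other vertex to `∅` is a simplicial
retraction onto it which is contiguous to the identity: a face containing `{1,2,3}` consists
of subsets of `{1,2,3}` already, and a face not containing it stays a face when `∅` is added.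
Contiguous simplicial maps are homotopic by the straight line in a common face.
-/

lemma Finset.sum_eq_sum_of_support_subset {ι M : Type*} [AddCommMonoid M] {f : ι → M}
    {s t : Finset ι} (hs : ∀ i, f i ≠ 0 → i ∈ s) (ht : ∀ i, f i ≠ 0 → i ∈ t) :
    ∑ i ∈ s, f i = ∑ i ∈ t, f i := by
  classical
  rw [← sum_filter_ne_zero s, ← sum_filter_ne_zero t]
  congr 1
  ext i
  simp only [mem_filter]
  exact ⟨fun h => ⟨ht i h.2, h.2⟩, fun h => ⟨hs i h.2, h.2⟩⟩

lemma Finset.card_symmDiff_eq {α : Type*} [DecidableEq α] (A B : Finset α) :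
    #(symmDiff A B) = #(A \ B) + #(B \ A) := by
  rw [symmDiff_def, sup_eq_union, card_union_of_disjoint disjoint_sdiff_sdiff]

lemma posPart_sub_of_mul_eq_zero {α : Type*} [Ring α] [LinearOrder α] [IsStrictOrderedRing α]
    {a b : α} (ha : 0 ≤ a) (hb : 0 ≤ b) (hab : a * b = 0) :
    (a - b)⁺ = a := by
  rcases mul_eq_zero.1 hab with rfl | rfl <;> simp [ha, hb]

lemma negPart_sub_of_mul_eq_zero {α : Type*} [Ring α] [LinearOrder α] [IsStrictOrderedRing α]
    {a b : α} (ha : 0 ≤ a) (hb : 0 ≤ b) (hab : a * b = 0) :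
    (a - b)⁻ = b := by
  rcases mul_eq_zero.1 hab with rfl | rfl <;> simp [ha, hb]

lemma EuclideanSpace.sum_abs_pos {ι : Type*} [Fintype ι] {x : EuclideanSpace ℝ ι} (hx : x ≠ 0) :
    0 < ∑ i, |x i| := by
  obtain ⟨i, hi⟩ : ∃ i, x i ≠ 0 := by
    by_contra! h
    exact hx (PiLp.ext h)
  exact sum_pos' (fun i _ => abs_nonneg _) ⟨i, mem_univ i, abs_pos.2 hi⟩

namespace AbsSC

variable {V : Type} {K L : AbsSC V}

@[ext]
lemma space_ext {p q : K.space} (h : ∀ v, p.1 v = q.1 v) : p = q :=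
  Subtype.ext (funext h)

lemma sum_eq_one_of_support_subset (p : K.space) {t : Finset V}
    (ht : ∀ v, p.1 v ≠ 0 → v ∈ t) : ∑ v ∈ t, p.1 v = 1 := by
  obtain ⟨-, s, -, hs, hsum⟩ := p.2
  exact (sum_eq_sum_of_support_subset ht hs).trans hsum

lemma mem_vertices_of_ne_zero (p : K.space) {v : V} (hv : p.1 v ≠ 0) : v ∈ K.vertices := by
  obtain ⟨-, s, hs, hsupp, -⟩ := p.2
  exact K.down_closed s hs {v} (singleton_subset_iff.2 (hsupp v hv)) (singleton_ne_empty v)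

lemma mem_space_of_support_subset {p : V → ℝ} (hp : ∀ v, 0 ≤ p v) {s t : Finset V}
    (hs : s ∈ K.faces) (hps : ∀ v, p v ≠ 0 → v ∈ s) (hpt : ∀ v, p v ≠ 0 → v ∈ t)
    (ht : ∑ v ∈ t, p v = 1) :
    (∀ v, 0 ≤ p v) ∧ ∃ s ∈ K.faces, (∀ v, p v ≠ 0 → v ∈ s) ∧ ∑ v ∈ s, p v = 1 :=
  ⟨hp, s, hs, hps, by rw [sum_eq_sum_of_support_subset hps hpt, ht]⟩

lemma homotopic_of_exists_common_face {X : Type*} [TopologicalSpace X] (f g : C(X, K.space))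
    (h : ∀ x, ∃ s ∈ K.faces, (∀ v, (f x).1 v ≠ 0 → v ∈ s) ∧ ∀ v, (g x).1 v ≠ 0 → v ∈ s) :
    f.Homotopic g := by
  refine ⟨{
    toFun := fun q => ⟨fun v => (1 - q.1.1) * (f q.2).1 v + q.1.1 * (g q.2).1 v, ?_⟩
    continuous_toFun := ?_
    map_zero_left := fun x => by ext v; simp
    map_one_left := fun x => by ext v; simp }⟩
  · obtain ⟨⟨t, ht0, ht1⟩, x⟩ := q
    obtain ⟨s, hs, hfs, hgs⟩ := h x
    have hsupp : ∀ v, (1 - t) * (f x).1 v + t * (g x).1 v ≠ 0 → v ∈ s := fun v hv => by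
      by_contra hvs
      rw [not_ne_iff.1 (mt (hfs v) hvs), not_ne_iff.1 (mt (hgs v) hvs)] at hv
      simp at hv
    refine mem_space_of_support_subset (fun v => ?_) hs hsupp hsupp ?_
    · exact add_nonneg (mul_nonneg (by linarith) ((f x).2.1 v)) (mul_nonneg ht0 ((g x).2.1 v))
    · rw [sum_add_distrib, ← mul_sum, ← mul_sum, sum_eq_one_of_support_subset _ hfs,
        sum_eq_one_of_support_subset _ hgs]
      ring
  · refine Continuous.subtype_mk (continuous_pi fun v => ?_) _
    have hcoord : ∀ F : C(X, K.space), Continuous fun x => (F x).1 v := fun F =>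
      (continuous_apply v).comp (continuous_subtype_val.comp F.continuous)
    have ht : Continuous fun q : unitInterval × X => (q.1 : ℝ) :=
      continuous_subtype_val.comp continuous_fst
    exact ((continuous_const.sub ht).mul ((hcoord f).comp continuous_snd)).add
      (ht.mul ((hcoord g).comp continuous_snd))

def homotopyEquivOfRetraction (hLK : L.faces ⊆ K.faces) (r : C(K.space, L.space))
    (hr : ∀ y, r (incl hLK y) = y)
    (hface : ∀ x, ∃ s ∈ K.faces, (∀ v, x.1 v ≠ 0 → v ∈ s) ∧ ∀ v, (r x).1 v ≠ 0 → v ∈ s) :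
    ContinuousMap.HomotopyEquiv K.space L.space where
  toFun := r
  invFun := incl hLK
  left_inv := homotopic_of_exists_common_face _ _ fun x => by
    obtain ⟨s, hs, hx, hrx⟩ := hface x
    exact ⟨s, hs, hrx, hx⟩
  right_inv := (ContinuousMap.ext hr : r.comp (incl hLK) = ContinuousMap.id _) ▸
    ContinuousMap.Homotopic.refl _

section SimplicialMap

variable {W : Type} [DecidableEq W] {M : AbsSC W}

/-- `U` is a finite set of vertices containing the support of `p`. -/
def pushWeights (U : Finset V) (φ : V → W) (p : V → ℝ) (w : W) : ℝ :=
  ∑ v ∈ U with φ v = w, p v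

lemma exists_of_pushWeights_ne_zero {U : Finset V} {φ : V → W} {p : V → ℝ} {w : W}
    (hw : pushWeights U φ p w ≠ 0) : ∃ v ∈ U, φ v = w ∧ p v ≠ 0 := by
  obtain ⟨v, hv, hpv⟩ := exists_ne_zero_of_sum_ne_zero hw
  exact ⟨v, (mem_filter.1 hv).1, (mem_filter.1 hv).2, hpv⟩

lemma pushWeights_eq_self [DecidableEq V] {U : Finset V} {φ : V → V} {p : V → ℝ}
    (hpU : ∀ v, p v ≠ 0 → v ∈ U) (hfix : ∀ v, p v ≠ 0 → φ v = v) : pushWeights U φ p = p := by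
  funext w
  by_cases hw : p w = 0
  · rw [hw]
    refine sum_eq_zero fun v hv => not_ne_iff.1 fun hpv => ?_
    rw [← (mem_filter.1 hv).2, hfix v hpv] at hw
    exact hpv hw
  · refine sum_eq_single_of_mem w (mem_filter.2 ⟨hpU w hw, hfix w hw⟩) fun v hv hvw => ?_
    exact not_ne_iff.1 fun hpv => hvw ((hfix v hpv).symm.trans (mem_filter.1 hv).2)

lemma pushWeights_mem (U : Finset V) (hU : K.vertices ⊆ U) (φ : V → W)
    (hφ : ∀ σ ∈ K.faces, σ.image φ ∈ M.faces) (p : K.space) :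
    (∀ w, 0 ≤ pushWeights U φ p.1 w) ∧ ∃ t ∈ M.faces,
      (∀ w, pushWeights U φ p.1 w ≠ 0 → w ∈ t) ∧ ∑ w ∈ t, pushWeights U φ p.1 w = 1 := by
  obtain ⟨hp, s, hs, hps, -⟩ := p.2
  have hsupp : ∀ t : Finset V, (∀ v ∈ U, p.1 v ≠ 0 → v ∈ t) →
      ∀ w, pushWeights U φ p.1 w ≠ 0 → w ∈ t.image φ := fun t ht w hw => by
    obtain ⟨v, hvU, hvw, hpv⟩ := exists_of_pushWeights_ne_zero hw
    exact hvw ▸ mem_image_of_mem φ (ht v hvU hpv)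
  refine mem_space_of_support_subset (fun _ => sum_nonneg fun v _ => hp v) (hφ s hs)
    (hsupp s fun v _ => hps v) (hsupp U fun v hv _ => hv) ?_
  unfold pushWeights
  rw [sum_fiberwise_of_maps_to fun v hv => mem_image_of_mem φ hv]
  exact sum_eq_one_of_support_subset p fun v hv => hU (mem_vertices_of_ne_zero p hv)

def simplicialMap (U : Finset V) (hU : K.vertices ⊆ U) (φ : V → W)
    (hφ : ∀ σ ∈ K.faces, σ.image φ ∈ M.faces) : C(K.space, M.space) where
  toFun p := ⟨pushWeights U φ p.1, pushWeights_mem U hU φ hφ p⟩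
  continuous_toFun := Continuous.subtype_mk (continuous_pi fun _ => continuous_finsetSum _
    fun v _ => (continuous_apply v).comp continuous_subtype_val) _

/-- `hcontig` says that `φ`, as a map `K → K`, is contiguous to the identity. -/
def homotopyEquivOfSimplicialRetraction [DecidableEq V] (hLK : L.faces ⊆ K.faces)
    (U : Finset V) (hU : K.vertices ⊆ U) (φ : V → V) (hφ : ∀ σ ∈ K.faces, σ.image φ ∈ L.faces)
    (hcontig : ∀ σ ∈ K.faces, σ ∪ σ.image φ ∈ K.faces) (hfix : ∀ v ∈ L.vertices, φ v = v) :
    ContinuousMap.HomotopyEquiv K.space L.space :=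
  homotopyEquivOfRetraction hLK (simplicialMap U hU φ hφ)
    (fun y => space_ext fun w => congrFun (pushWeights_eq_self
      (fun v hv => hU (hLK (mem_vertices_of_ne_zero y hv)))
      fun v hv => hfix v (mem_vertices_of_ne_zero y hv)) w)
    fun x => by
      obtain ⟨-, s, hs, hxs, -⟩ := x.2
      refine ⟨s ∪ s.image φ, hcontig s hs, fun v hv => mem_union_left _ (hxs v hv), ?_⟩
      intro w hw
      obtain ⟨v, -, hvw, hv⟩ := exists_of_pushWeights_ne_zero hw
      exact mem_union_right _ (hvw ▸ mem_image_of_mem φ (hxs v hv))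

end SimplicialMap

/-- The boundary of the cross-polytope whose antipodal vertex pairs are
`e (k, true)`, `e (k, false)`. -/
def crossPolytope {n : ℕ} (e : Fin n × Bool → V) : AbsSC V where
  faces := {σ | σ.Nonempty ∧ (∀ v ∈ σ, v ∈ Set.range e) ∧
    ∀ k, e (k, true) ∈ σ → e (k, false) ∉ σ}
  not_empty_mem h := by simpa using h.1
  down_closed := by
    rintro s ⟨-, hse, hanti⟩ t hts htne
    exact ⟨nonempty_iff_ne_empty.2 htne, fun v hv => hse v (hts hv),
      fun k hk hk' => hanti k (hts hk) (hts hk')⟩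

section CrossPolytope

variable {n : ℕ} {e : Fin (n + 1) × Bool → V}

/-- On the realization of the cross-polytope, a homeomorphism onto the unit `ℓ¹`-sphere. -/
def crossCoord (e : Fin (n + 1) × Bool → V) (p : V → ℝ) :
    EuclideanSpace ℝ (Fin (n + 1)) :=
  WithLp.toLp 2 fun k => p (e (k, true)) - p (e (k, false))

/-- The inverse of `crossCoord` on the `ℓ¹`-sphere, composed with radial projection. -/
noncomputable def crossWeights (e : Fin (n + 1) × Bool → V)
    (x : EuclideanSpace ℝ (Fin (n + 1))) : V → ℝ :=
  Function.extend e (fun kb => (if kb.2 then (x kb.1)⁺ else (x kb.1)⁻) / ∑ k, |x k|) 0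

lemma weight_mul_weight_antipode (p : (crossPolytope e).space) (k : Fin (n + 1)) :
    p.1 (e (k, true)) * p.1 (e (k, false)) = 0 := by
  obtain ⟨-, s, hs, hsupp, -⟩ := p.2
  by_contra h
  obtain ⟨h₁, h₂⟩ := mul_ne_zero_iff.1 h
  exact hs.2.2 k (hsupp _ h₁) (hsupp _ h₂)

lemma sum_abs_crossCoord (he : e.Injective) (p : (crossPolytope e).space) :
    ∑ k, |crossCoord e p.1 k| = 1 := by
  have habs : ∀ k, |crossCoord e p.1 k| = p.1 (e (k, true)) + p.1 (e (k, false)) := fun k => by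
    have := weight_mul_weight_antipode p k
    rcases mul_eq_zero.1 this with h | h <;>
      simp [crossCoord, h, abs_of_nonneg, abs_of_nonpos, p.2.1]
  obtain ⟨-, s, hs, hsupp, -⟩ := p.2
  have hrange : ∀ v, p.1 v ≠ 0 → v ∈ univ.map ⟨e, he⟩ := fun v hv => by
    obtain ⟨kb, rfl⟩ := hs.2.1 v (hsupp v hv)
    exact mem_map_of_mem _ (mem_univ kb)
  have hsum := sum_eq_one_of_support_subset p hrange
  rw [sum_map, Fintype.sum_prod_type] at hsum
  simpa [habs] using hsum

lemma crossWeights_apply (he : e.Injective) (x : EuclideanSpace ℝ (Fin (n + 1)))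
    (kb : Fin (n + 1) × Bool) :
    crossWeights e x (e kb) = (if kb.2 then (x kb.1)⁺ else (x kb.1)⁻) / ∑ k, |x k| :=
  he.extend_apply _ _ kb

lemma crossWeights_of_notMem_range {x : EuclideanSpace ℝ (Fin (n + 1))} {v : V}
    (hv : v ∉ Set.range e) : crossWeights e x v = 0 :=
  Function.extend_apply' _ _ v hv

lemma crossCoord_crossWeights (he : e.Injective) (x : EuclideanSpace ℝ (Fin (n + 1))) :
    crossCoord e (crossWeights e x) = (∑ k, |x k|)⁻¹ • x := by
  ext k
  simp [crossCoord, crossWeights_apply he, div_eq_inv_mul, ← mul_sub, posPart_sub_negPart]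

lemma crossWeights_mem (he : e.Injective) {x : EuclideanSpace ℝ (Fin (n + 1))} (hx : x ≠ 0) :
    (∀ v, 0 ≤ crossWeights e x v) ∧ ∃ s ∈ (crossPolytope e).faces,
      (∀ v, crossWeights e x v ≠ 0 → v ∈ s) ∧ ∑ v ∈ s, crossWeights e x v = 1 := by
  classical
  have hN := EuclideanSpace.sum_abs_pos hx
  set t := univ.map ⟨e, he⟩
  have ht : ∀ v, crossWeights e x v ≠ 0 → v ∈ t := fun v hv => by
    by_contra hvt
    exact hv (crossWeights_of_notMem_range fun ⟨kb, hkb⟩ =>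
      hvt (hkb ▸ mem_map_of_mem _ (mem_univ kb)))
  have hsum : ∑ v ∈ t, crossWeights e x v = 1 := by
    simp only [t, sum_map, Function.Embedding.coeFn_mk, Fintype.sum_prod_type, Fintype.sum_bool,
      crossWeights_apply he, if_true, Bool.false_eq_true, if_false, posPart_add_negPart,
      ← sum_div, div_self hN.ne']
  set s := t.filter (crossWeights e x · ≠ 0)
  have hs : ∀ v, crossWeights e x v ≠ 0 → v ∈ s := fun v hv => mem_filter.2 ⟨ht v hv, hv⟩
  refine mem_space_of_support_subset (fun v => ?_) ⟨?_, fun v hv => ?_, fun k hk hk' => ?_⟩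
    hs ht hsum
  · by_cases hv : v ∈ Set.range e
    · obtain ⟨kb, rfl⟩ := hv
      rw [crossWeights_apply he]
      refine div_nonneg ?_ hN.le
      split_ifs
      exacts [posPart_nonneg _, negPart_nonneg _]
    · rw [crossWeights_of_notMem_range hv]
  · exact nonempty_of_sum_ne_zero (by rw [sum_filter_ne_zero, hsum]; exact one_ne_zero)
  · obtain ⟨kb, -, rfl⟩ := mem_map.1 (mem_filter.1 hv).1
    exact ⟨kb, rfl⟩
  · have hpos := (mem_filter.1 hk).2
    have hneg := (mem_filter.1 hk').2
    simp only [crossWeights_apply he, if_true, Bool.false_eq_true, if_false, ne_eq,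
      div_eq_zero_iff, hN.ne', or_false, posPart_eq_zero, negPart_eq_zero] at hpos hneg
    exact hpos (le_of_lt (not_le.1 hneg))

lemma crossCoord_ne_zero (he : e.Injective) (p : (crossPolytope e).space) :
    crossCoord e p.1 ≠ 0 := by
  intro h
  have := sum_abs_crossCoord he p
  simp [h] at this

lemma crossWeights_smul_crossCoord (he : e.Injective) {c : ℝ} (hc : 0 < c)
    (p : (crossPolytope e).space) : crossWeights e (c • crossCoord e p.1) = p.1 := by
  funext v
  by_cases hv : v ∈ Set.range e
  · obtain ⟨⟨k, b⟩, rfl⟩ := hv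
    have hN : ∑ k, |(c • crossCoord e p.1) k| = c := by
      simp only [PiLp.smul_apply, smul_eq_mul, abs_mul, abs_of_pos hc, ← mul_sum,
        sum_abs_crossCoord he p, mul_one]
    have hprod : c * p.1 (e (k, true)) * (c * p.1 (e (k, false))) = 0 := by
      rw [mul_mul_mul_comm, weight_mul_weight_antipode p k, mul_zero]
    have ha := mul_nonneg hc.le (p.2.1 (e (k, true)))
    have hb := mul_nonneg hc.le (p.2.1 (e (k, false)))
    rw [crossWeights_apply he, hN]
    cases b <;>
      simp [crossCoord, mul_sub, posPart_sub_of_mul_eq_zero ha hb hprod,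
        negPart_sub_of_mul_eq_zero ha hb hprod, hc.ne']
  · obtain ⟨-, s, hs, hsupp, -⟩ := p.2
    rw [crossWeights_of_notMem_range hv]
    exact (not_ne_iff.1 fun h => hv (hs.2.1 v (hsupp v h))).symm

lemma continuous_crossCoord : Continuous fun p : (crossPolytope e).space => crossCoord e p.1 :=
  (PiLp.continuous_toLp 2 _).comp <| continuous_pi fun _ =>
    ((continuous_apply _).comp continuous_subtype_val).sub
      ((continuous_apply _).comp continuous_subtype_val)

lemma continuousOn_crossWeights_apply (he : e.Injective) (v : V) :
    ContinuousOn (fun x : EuclideanSpace ℝ (Fin (n + 1)) => crossWeights e x v) {x | x ≠ 0} := by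
  have hcoord : ∀ k, Continuous fun x : EuclideanSpace ℝ (Fin (n + 1)) => x k := fun k =>
    (continuous_apply k).comp (PiLp.continuous_ofLp 2 _)
  by_cases hv : v ∈ Set.range e
  · obtain ⟨⟨k, b⟩, rfl⟩ := hv
    simp only [crossWeights_apply he]
    refine ContinuousOn.div (Continuous.continuousOn ?_) (Continuous.continuousOn
      (continuous_finsetSum _ fun k _ => (hcoord k).abs))
      fun x hx => (EuclideanSpace.sum_abs_pos hx).ne'
    cases b
    exacts [continuous_negPart.comp (hcoord k), continuous_posPart.comp (hcoord k)]
  · simp only [crossWeights_of_notMem_range hv]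
    exact continuousOn_const

lemma normalize_crossCoord_crossWeights (he : e.Injective) (x : Sph n) :
    ‖crossCoord e (crossWeights e x.1)‖⁻¹ • crossCoord e (crossWeights e x.1) = x.1 := by
  have hN := EuclideanSpace.sum_abs_pos (ne_zero_of_mem_unit_sphere x)
  rw [crossCoord_crossWeights he, norm_smul, norm_inv, Real.norm_eq_abs, abs_of_pos hN,
    norm_eq_of_mem_sphere x, mul_one, inv_inv, smul_smul, mul_inv_cancel₀ hN.ne', one_smul]

noncomputable def crossPolytopeHomeomorph (he : e.Injective) :
    (crossPolytope e).space ≃ₜ Sph n where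
  toFun p := ⟨‖crossCoord e p.1‖⁻¹ • crossCoord e p.1,
    mem_sphere_zero_iff_norm.2 (norm_smul_inv_norm (crossCoord_ne_zero he p))⟩
  invFun x := ⟨crossWeights e x.1, crossWeights_mem he (ne_zero_of_mem_unit_sphere x)⟩
  left_inv p := space_ext fun v => congrFun (crossWeights_smul_crossCoord he
    (inv_pos.2 (norm_pos_iff.2 (crossCoord_ne_zero he p))) p) v
  right_inv x := Subtype.ext (normalize_crossCoord_crossWeights he x)
  continuous_toFun := Continuous.subtype_mk ((continuous_crossCoord.norm.inv₀
    fun p => norm_ne_zero_iff.2 (crossCoord_ne_zero he p)).smul continuous_crossCoord) _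
  continuous_invFun := Continuous.subtype_mk (continuous_pi fun v =>
    (continuousOn_crossWeights_apply he v).comp_continuous continuous_subtype_val
      fun x => ne_zero_of_mem_unit_sphere x) _

end CrossPolytope

end AbsSC

open AbsSC

section OneTwoThree

variable {m : ℕ}

lemma sort_one_two_three : ({1, 2, 3} : Finset ℕ).sort (· ≤ ·) = [1, 2, 3] := by
  rw [show ({1, 2, 3} : Finset ℕ) = [1, 2, 3].toFinset by decide,
    List.toFinset_sort _ (by decide)]
  decide

lemma not_lex_sort_lt_one_two_three {B : Finset ℕ} (hB : B ⊆ Icc 1 m) (hcard : #B = 3) :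
    ¬ List.Lex (· < ·) (B.sort (· ≤ ·)) [1, 2, 3] := by
  have hpos : ∀ x ∈ B.sort (· ≤ ·), 1 ≤ x := fun x hx =>
    (mem_Icc.1 (hB ((mem_sort (α := ℕ) (· ≤ ·)).1 hx))).1
  have hsorted := (sortedLT_sort B).pairwise
  obtain ⟨a, b, c, habc⟩ := List.length_eq_three.1 ((length_sort (α := ℕ) (· ≤ ·)).trans hcard)
  rw [habc] at hpos hsorted ⊢
  simp only [List.mem_cons, List.not_mem_nil, or_false, forall_eq_or_imp, forall_eq,
    List.pairwise_cons] at hpos hsorted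
  simp [List.cons_lex_cons_iff]
  omega

lemma mem_FprecLE_one_two_three {B : Finset ℕ} :
    B ∈ FprecLE m {1, 2, 3} ↔ B ⊆ Icc 1 m ∧ (#B ≤ 2 ∨ B = {1, 2, 3}) := by
  have hcard : #({1, 2, 3} : Finset ℕ) = 3 := rfl
  refine ⟨fun ⟨hB, hle⟩ => ⟨hB, ?_⟩, fun ⟨hB, h⟩ => ⟨hB, ?_⟩⟩
  · rcases hle with (hlt | ⟨hc, hlex⟩) | rfl
    · omega
    · rw [sort_one_two_three] at hlex
      exact absurd hlex (not_lex_sort_lt_one_two_three hB (hc.trans hcard))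
    · exact Or.inr rfl
  · rcases h with h | rfl
    · exact Or.inl (Or.inl (by omega))
    · exact Or.inr rfl

lemma mem_FprecLE_of_subset (hm : 3 ≤ m) {B : Finset ℕ} (hB : B ⊆ {1, 2, 3}) :
    B ∈ FprecLE m {1, 2, 3} := by
  refine mem_FprecLE_one_two_three.2 ⟨hB.trans fun x hx => ?_, ?_⟩
  · simp only [mem_insert, mem_singleton] at hx
    rw [mem_Icc]
    omega
  · rcases (card_le_card hB).lt_or_eq with h | h
    · exact Or.inl (Nat.le_of_lt_succ h)
    · exact Or.inr (eq_of_subset_of_card_le hB h.ge)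

/-- The eight subsets of `{1,2,3}`, as four pairs of complementary sets. -/
def octaVertex : Fin 4 × Bool → Finset ℕ
  | (k, true) => ![∅, {1}, {2}, {3}] k
  | (k, false) => {1, 2, 3} \ ![∅, {1}, {2}, {3}] k

lemma octaVertex_injective : octaVertex.Injective := by
  decide

lemma mem_range_octaVertex {A : Finset ℕ} : A ∈ Set.range octaVertex ↔ A ⊆ {1, 2, 3} := by
  constructor
  · rintro ⟨kb, rfl⟩
    revert kb
    decide
  · intro hA
    have : ∀ A ∈ ({1, 2, 3} : Finset ℕ).powerset, ∃ kb, octaVertex kb = A := by decide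
    exact this A (mem_powerset.2 hA)

lemma card_symmDiff_octaVertex_le : ∀ a b : Fin 4 × Bool, (a.1 = b.1 → a.2 = b.2) →
    #(symmDiff (octaVertex a) (octaVertex b)) ≤ 2 := by
  decide

lemma two_lt_card_symmDiff_octaVertex :
    ∀ k : Fin 4, 2 < #(symmDiff (octaVertex (k, true)) (octaVertex (k, false))) := by
  decide

lemma crossPolytope_faces_subset (hm : 3 ≤ m) :
    (crossPolytope octaVertex).faces ⊆ (VRc (FprecLE m {1, 2, 3}) 2).faces := by
  rintro σ ⟨hne, hrange, hanti⟩
  refine ⟨hne, fun A hA => mem_FprecLE_of_subset hm (mem_range_octaVertex.1 (hrange A hA)),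
    fun A hA B hB => ?_⟩
  obtain ⟨a, rfl⟩ := hrange A hA
  obtain ⟨b, rfl⟩ := hrange B hB
  refine card_symmDiff_octaVertex_le a b ?_
  obtain ⟨k, b₁⟩ := a
  obtain ⟨l, b₂⟩ := b
  rintro (rfl : k = l)
  cases b₁ <;> cases b₂
  exacts [rfl, absurd hA (hanti k hB), absurd hB (hanti k hA), rfl]

lemma mem_crossPolytope_of_mem_VRc {σ : Finset (Finset ℕ)}
    (hσ : σ ∈ (VRc (FprecLE m {1, 2, 3}) 2).faces) (hsub : ∀ A ∈ σ, A ⊆ {1, 2, 3}) :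
    σ ∈ (crossPolytope octaVertex).faces :=
  ⟨hσ.1, fun A hA => mem_range_octaVertex.2 (hsub A hA), fun k hk hk' =>
    (two_lt_card_symmDiff_octaVertex k).not_ge (hσ.2.2 _ hk _ hk')⟩

lemma subset_of_mem_face_of_one_two_three_mem {σ : Finset (Finset ℕ)}
    (hσ : σ ∈ (VRc (FprecLE m {1, 2, 3}) 2).faces) (h123 : {1, 2, 3} ∈ σ) {A : Finset ℕ}
    (hA : A ∈ σ) : A ⊆ {1, 2, 3} := by
  rcases (mem_FprecLE_one_two_three.1 (hσ.2.1 A hA)).2 with hcard | rfl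
  · have hdist := hσ.2.2 A hA _ h123
    rw [card_symmDiff_eq] at hdist
    have h₁ := card_sdiff_add_card_inter A {1, 2, 3}
    have h₂ := card_sdiff_add_card_inter ({1, 2, 3} : Finset ℕ) A
    rw [inter_comm, show #({1, 2, 3} : Finset ℕ) = 3 from rfl] at h₂
    exact sdiff_eq_empty_iff_subset.1 (card_eq_zero.1 (by omega))
  · exact Subset.rfl

def octaRetraction (A : Finset ℕ) : Finset ℕ := if A ⊆ {1, 2, 3} then A else ∅

lemma octaRetraction_subset (A : Finset ℕ) : octaRetraction A ⊆ {1, 2, 3} := by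
  unfold octaRetraction
  split_ifs with h
  exacts [h, empty_subset _]

lemma union_image_octaRetraction_mem (hm : 3 ≤ m) {σ : Finset (Finset ℕ)}
    (hσ : σ ∈ (VRc (FprecLE m {1, 2, 3}) 2).faces) :
    σ ∪ σ.image octaRetraction ∈ (VRc (FprecLE m {1, 2, 3}) 2).faces := by
  by_cases h123 : {1, 2, 3} ∈ σ
  · have hfix : σ.image octaRetraction = σ := by
      conv_rhs => rw [← image_id (s := σ)]
      exact image_congr fun A hA =>
        if_pos (subset_of_mem_face_of_one_two_three_mem hσ h123 hA)
    rwa [hfix, union_self]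
  · have hcard : ∀ A ∈ σ, #A ≤ 2 := fun A hA =>
      ((mem_FprecLE_one_two_three.1 (hσ.2.1 A hA)).2.resolve_right fun h => h123 (h ▸ hA))
    have hinsert : insert ∅ σ ∈ (VRc (FprecLE m {1, 2, 3}) 2).faces := by
      refine ⟨insert_nonempty _ _, ?_, ?_⟩
      · simpa [mem_FprecLE_of_subset hm (empty_subset _)] using hσ.2.1
      · simp only [mem_insert]
        rintro A (rfl | hA) B (rfl | hB)
        · simp
        · exact (bot_symmDiff B).symm ▸ hcard B hB
        · exact (symmDiff_bot A).symm ▸ hcard A hA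
        · exact hσ.2.2 A hA B hB
    refine (VRc _ 2).down_closed _ hinsert _ (union_subset (subset_insert _ _) fun B hB => ?_)
      (nonempty_iff_ne_empty.1 (hσ.1.mono subset_union_left))
    obtain ⟨A, hA, rfl⟩ := mem_image.1 hB
    unfold octaRetraction
    split_ifs
    exacts [mem_insert_of_mem hA, mem_insert_self _ _]

lemma image_octaRetraction_mem (hm : 3 ≤ m) {σ : Finset (Finset ℕ)}
    (hσ : σ ∈ (VRc (FprecLE m {1, 2, 3}) 2).faces) :
    σ.image octaRetraction ∈ (crossPolytope octaVertex).faces := by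
  refine mem_crossPolytope_of_mem_VRc ((VRc _ 2).down_closed _
    (union_image_octaRetraction_mem hm hσ) _ subset_union_right
    (nonempty_iff_ne_empty.1 (hσ.1.image _))) fun B hB => ?_
  obtain ⟨A, -, rfl⟩ := mem_image.1 hB
  exact octaRetraction_subset A

lemma vertices_VRc_subset : (VRc (FprecLE m {1, 2, 3}) 2).vertices ⊆ (Icc 1 m).powerset :=
  fun v hv => mem_powerset.2 (hv.2.1 v (mem_singleton_self v)).1

lemma octaRetraction_eq_self {v : Finset ℕ} (hv : v ∈ (crossPolytope octaVertex).vertices) :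
    octaRetraction v = v :=
  if_pos (mem_range_octaVertex.1 (hv.2.1 v (mem_singleton_self v)))

end OneTwoThree

/-- For `A = {1, 2, 3} ⊆ [m]` with `m ≥ 3`, `VR(F^m_{⪯A}, 2) ≃ S³`. -/
theorem stmt13 (m : ℕ) (hm : 3 ≤ m) :
    AbsSC.HEquivTop (VRc (FprecLE m {1, 2, 3}) 2) (Sph 3) :=
  ⟨(homotopyEquivOfSimplicialRetraction (crossPolytope_faces_subset hm) _ vertices_VRc_subset
    octaRetraction (fun _ => image_octaRetraction_mem hm)
    (fun _ => union_image_octaRetraction_mem hm)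
    fun _ => octaRetraction_eq_self).trans
      (crossPolytopeHomeomorph octaVertex_injective).toHomotopyEquiv⟩
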